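/- arXiv:1812.06641 — 6 statements merged into one kernel-verified Lean document; each statement's English description precedes it below -/
import Mathlib

section
/- Let $w(u,v) = 1 - (a u^2 + b v^2 + 2 b u v) - 2(1-u-v)(a u + h b v)$ with $0 < b \leq a < 1$ and $h \in [0,1]$. Then for all $(u,v)$ in the triangle $T = \{(u,v) \in [0,1]^2 : u + v \leq 1\}$, one has $1 - a \leq w(u,v) \leq 1$; in particular $w(u,v) > 0$ on $T$. -/
open Set

theorem stmt_3 (a b h : ℝ) (hb : 0 < b) (hba : b ≤ a) (ha : a < 1)
    (hh : h ∈ Icc (0:ℝ) 1) :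
    ∀ u v : ℝ, 0 ≤ u → 0 ≤ v → u + v ≤ 1 →
      1 - a ≤ 1 - (a*u^2 + b*v^2 + 2*b*u*v) - 2*(1 - u - v)*(a*u + h*b*v) ∧
      1 - (a*u^2 + b*v^2 + 2*b*u*v) - 2*(1 - u - v)*(a*u + h*b*v) ≤ 1 ∧
      0 < 1 - (a*u^2 + b*v^2 + 2*b*u*v) - 2*(1 - u - v)*(a*u + h*b*v) := by
  obtain ⟨h0, h1⟩ := hh
  intro u v hu hv huv
  have hs : 0 ≤ 1 - u - v := by linarith
  have hb' : 0 < a := lt_of_lt_of_le hb hba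
  have key : a*u^2 + b*v^2 + 2*b*u*v + 2*(1 - u - v)*(a*u + h*b*v) ≤ a := by
    nlinarith [mul_nonneg hu hv, mul_nonneg hs hv, mul_nonneg hs hu,
      sq_nonneg (1 - u - v), mul_nonneg (mul_nonneg hs hv) (sub_nonneg.2 h1),
      mul_nonneg (mul_nonneg hs hv) (sub_nonneg.2 hba),
      mul_nonneg (mul_nonneg hu hv) (sub_nonneg.2 hba),
      mul_nonneg (sq_nonneg v) (sub_nonneg.2 hba),
      mul_pos hb' (mul_pos hb' hb)]
  refine ⟨by linarith, ?_, by linarith⟩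
  have q1 : 0 ≤ a*u^2 + b*v^2 + 2*b*u*v := by positivity
  have q2 : 0 ≤ 2*(1 - u - v)*(a*u + h*b*v) := by positivity
  linarith
end

section
/- If $0 < b \leq a < 1$, $h \in [0,1]$, and either $a > b$ or $h < 1$, then the unique critical point of $w(u,v) = 1 - (a u^2 + b v^2 + 2 b u v) - 2(1-u-v)(a u + h b v)$, given by $(u^\star, v^\star) = \frac{1}{a(a-b) + (1-h)^2 b^2}\,\bigl(b(1-h)(a-hb),\; a(a-b)\bigr)$, does not lie in the open triangle $\{(u,v) : u > 0, v > 0, u+v < 1\}$. -/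
/-!
The excess of the critical point over the hypotenuse is
`u⋆ + v⋆ - 1 = b (1 - h) (a - b) / D` with `D = a (a - b) + (1 - h)² b²`,
which is nonnegative as soon as `D > 0`; and `D > 0` is forced by `v⋆ = a (a - b) / D > 0`,
because `a (a - b) ≥ 0`.
-/

open Set

lemma pos_of_div_pos_of_nonneg {α : Type*} [Field α] [LinearOrder α] [IsStrictOrderedRing α]
    {x y : α} (hx : 0 ≤ x) (hxy : 0 < x / y) : 0 < y :=
  (div_pos_iff.mp hxy).elim (·.2) fun hneg => absurd hneg.1 hx.not_gt

lemma criticalPoint_denom_sub_num (a b h : ℝ) :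
    (a*(a-b) + (1-h)^2*b^2) - (b*(1-h)*(a - h*b) + a*(a-b)) = b*(1-h)*(b-a) := by
  ring

lemma one_le_criticalPoint_add {a b h : ℝ} (hb : 0 ≤ b) (hba : b ≤ a) (hh : h ≤ 1)
    (hD : 0 < a*(a-b) + (1-h)^2*b^2) :
    1 ≤ b*(1-h)*(a - h*b) / (a*(a-b) + (1-h)^2*b^2)
      + a*(a-b) / (a*(a-b) + (1-h)^2*b^2) := by
  rw [← add_div, one_le_div hD, ← sub_nonpos, criticalPoint_denom_sub_num]
  exact mul_nonpos_of_nonneg_of_nonpos (mul_nonneg hb (sub_nonneg.2 hh)) (sub_nonpos.2 hba)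

theorem stmt_4_general (a b h : ℝ) (hb : 0 < b) (hba : b ≤ a)
    (hh : h ∈ Icc (0:ℝ) 1) :
    ¬ (0 < b*(1-h)*(a - h*b) / (a*(a-b) + (1-h)^2*b^2) ∧
       0 < a*(a-b) / (a*(a-b) + (1-h)^2*b^2) ∧
       b*(1-h)*(a - h*b) / (a*(a-b) + (1-h)^2*b^2)
         + a*(a-b) / (a*(a-b) + (1-h)^2*b^2) < 1) := by
  rintro ⟨-, hv, huv⟩
  have hD : 0 < a*(a-b) + (1-h)^2*b^2 :=
    pos_of_div_pos_of_nonneg (mul_nonneg (hb.le.trans hba) (sub_nonneg.2 hba)) hv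
  exact (one_le_criticalPoint_add hb.le hba hh.2 hD).not_gt huv

theorem stmt_4 (a b h : ℝ) (hb : 0 < b) (hba : b ≤ a) (ha : a < 1)
    (hh : h ∈ Icc (0:ℝ) 1) (hcase : b < a ∨ h < 1) :
    ¬ (0 < b*(1-h)*(a - h*b) / (a*(a-b) + (1-h)^2*b^2) ∧
       0 < a*(a-b) / (a*(a-b) + (1-h)^2*b^2) ∧
       b*(1-h)*(a - h*b) / (a*(a-b) + (1-h)^2*b^2)
         + a*(a-b) / (a*(a-b) + (1-h)^2*b^2) < 1) :=
  stmt_4_general a b h hb hba hh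
end

section
/- There exists a unique $a_0 \in (1/2, 1)$ such that $I(a) = \frac{\sqrt{1-a}}{a^{3/2}} \arctan\left(\sqrt{\frac{a}{1-a}}\right) - \frac{1}{2} - \frac{1-a}{a}$ is positive for $a \in [1/2, a_0)$, zero at $a = a_0$, and negative for $a \in (a_0, 1)$. -/
/-!
In the variable `t = √(a / (1 - a))`, which increases from `0` to `∞` as `a` runs over `(0, 1)`,
`I` becomes `(1 + t²) arctan t / t³ - 1 / t² - 1 / 2`, with derivative
`(3t - (3 + t²) arctan t) / t⁴`. This is negative because `arctan t > 3t / (3 + t²)` for `t > 0`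
(the difference vanishes at `0` and has derivative `4t⁴ / ((1 + t²)(3 + t²)²)`).
Hence `I` is strictly decreasing on `(0, 1)`, and as `I (1/2) = π/2 - 3/2 > 0` while
`I (16/17) = (17/64) arctan 4 - 9/16 < 0`, it has exactly one zero `a₀` in `(1/2, 1)`,
found by the intermediate value theorem.
-/
open Set Real

noncomputable def Ifun (a : ℝ) : ℝ :=
  Real.sqrt (1-a) / a ^ ((3:ℝ)/2) * Real.arctan (Real.sqrt (a/(1-a)))
    - 1/2 - (1-a)/a

theorem three_mul_div_lt_arctan {t : ℝ} (ht : 0 < t) : 3 * t / (3 + t ^ 2) < arctan t := by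
  let g : ℝ → ℝ := fun x => arctan x - 3 * x / (3 + x ^ 2)
  have hg : ∀ x, HasDerivAt g (4 * x ^ 4 / ((1 + x ^ 2) * (3 + x ^ 2) ^ 2)) x := by
    intro x
    refine ((hasDerivAt_arctan x).sub (((hasDerivAt_id x).const_mul 3).div
      ((hasDerivAt_pow 2 x).const_add 3) (by positivity))).congr_deriv ?_
    simp only [id]
    field_simp
    ring
  have hmono : StrictMonoOn g (Ici 0) := by
    refine strictMonoOn_of_deriv_pos (convex_Ici 0)
      (fun x _ => (hg x).continuousAt.continuousWithinAt) fun x hx => ?_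
    rw [interior_Ici] at hx
    rw [(hg x).deriv]
    have : 0 < x := hx
    positivity
  have := hmono self_mem_Ici ht.le ht
  simp only [g, arctan_zero] at this
  linarith

noncomputable def IfunTan (t : ℝ) : ℝ := (1 + t ^ 2) * arctan t / t ^ 3 - 1 / t ^ 2 - 1 / 2

theorem hasDerivAt_IfunTan {t : ℝ} (ht : t ≠ 0) :
    HasDerivAt IfunTan ((3 * t - (3 + t ^ 2) * arctan t) / t ^ 4) t := by
  refine (((((hasDerivAt_pow 2 t).const_add 1).mul (hasDerivAt_arctan t)).div
    (hasDerivAt_pow 3 t) (by positivity)).sub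
    ((hasDerivAt_const t 1).div (hasDerivAt_pow 2 t) (by positivity))).sub_const (1 / 2)
    |>.congr_deriv ?_
  simp only [Pi.mul_apply]
  field_simp
  ring

theorem IfunTan_continuousOn : ContinuousOn IfunTan (Ioi 0) :=
  fun _ ht => (hasDerivAt_IfunTan (ne_of_gt ht)).continuousAt.continuousWithinAt

theorem IfunTan_strictAntiOn : StrictAntiOn IfunTan (Ioi 0) := by
  refine strictAntiOn_of_deriv_neg (convex_Ioi 0) IfunTan_continuousOn fun t ht => ?_
  rw [interior_Ioi] at ht
  have ht : 0 < t := ht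
  rw [(hasDerivAt_IfunTan ht.ne').deriv]
  have := three_mul_div_lt_arctan ht
  rw [div_lt_iff₀ (by positivity)] at this
  exact div_neg_of_neg_of_pos (by linarith) (by positivity)

theorem Ifun_eq_IfunTan {a : ℝ} (ha : a ∈ Ioo 0 1) : Ifun a = IfunTan √(a / (1 - a)) := by
  obtain ⟨ha0, ha1⟩ := ha
  have hs : 0 < √a := sqrt_pos.2 ha0
  have hc : 0 < √(1 - a) := sqrt_pos.2 (by linarith)
  have hs2 : √a ^ 2 = a := sq_sqrt ha0.le
  have hc2 : √(1 - a) ^ 2 = 1 - a := sq_sqrt (by linarith)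
  have hpow : a ^ ((3 : ℝ) / 2) = √a ^ 3 := by
    rw [sqrt_eq_rpow, ← rpow_natCast, ← rpow_mul ha0.le]
    norm_num
  rw [Ifun, IfunTan, sqrt_div ha0.le, hpow]
  field_simp
  linear_combination (2 * a * √a - 2 * a * √(1 - a) * arctan (√a / √(1 - a))) * hc2
    + (-2 * a * √(1 - a) * arctan (√a / √(1 - a)) - 2 * (1 - a) * √a) * hs2

theorem strictMonoOn_sqrt_div_one_sub :
    StrictMonoOn (fun a : ℝ => √(a / (1 - a))) (Ioo 0 1) := by
  intro a ha b hb hab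
  refine sqrt_lt_sqrt (div_nonneg ha.1.le (by linarith [ha.2])) ?_
  rw [div_lt_div_iff₀ (by linarith [ha.2]) (by linarith [hb.2])]
  nlinarith

theorem mapsTo_sqrt_div_one_sub : MapsTo (fun a : ℝ => √(a / (1 - a))) (Ioo 0 1) (Ioi 0) :=
  fun _ ha => sqrt_pos.2 (div_pos ha.1 (by linarith [ha.2]))

theorem Ifun_strictAntiOn : StrictAntiOn Ifun (Ioo 0 1) := fun a ha b hb hab => by
  rw [Ifun_eq_IfunTan ha, Ifun_eq_IfunTan hb]
  exact IfunTan_strictAntiOn (mapsTo_sqrt_div_one_sub ha) (mapsTo_sqrt_div_one_sub hb)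
    (strictMonoOn_sqrt_div_one_sub ha hb hab)

theorem Ifun_continuousOn : ContinuousOn Ifun (Ioo 0 1) := by
  refine (IfunTan_continuousOn.comp ?_ mapsTo_sqrt_div_one_sub).congr
    fun _ ha => Ifun_eq_IfunTan ha
  exact (continuousOn_id.div (continuousOn_const.sub continuousOn_id)
    fun a ha => sub_ne_zero.2 (ne_of_gt ha.2)).sqrt

theorem Ifun_one_half : Ifun (1 / 2) = π / 2 - 3 / 2 := by
  rw [Ifun_eq_IfunTan (by norm_num), show (1 / 2 : ℝ) / (1 - 1 / 2) = 1 by norm_num, sqrt_one,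
    IfunTan, arctan_one]
  ring

theorem Ifun_sixteen_div_seventeen_neg : Ifun (16 / 17) < 0 := by
  rw [Ifun_eq_IfunTan (by norm_num), show (16 / 17 : ℝ) / (1 - 16 / 17) = 4 ^ 2 by norm_num,
    sqrt_sq (by norm_num), IfunTan]
  linarith [arctan_lt_pi_div_two 4, pi_le_four]

theorem existsUnique_sign_change_of_strictAntiOn {f : ℝ → ℝ} {l r b : ℝ}
    (hf : StrictAntiOn f (Ico l r)) (hfc : ContinuousOn f (Icc l b)) (hlb : l ≤ b) (hbr : b < r)
    (hl : 0 < f l) (hb : f b < 0) :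
    ∃! x, x ∈ Ioo l r ∧ (∀ y ∈ Ico l x, 0 < f y) ∧ f x = 0 ∧
      ∀ y ∈ Ioo x r, f y < 0 := by
  obtain ⟨x, ⟨hlx, hxb⟩, hfx⟩ := intermediate_value_Icc' hlb hfc ⟨hb.le, hl.le⟩
  have hx : x ∈ Ico l r := ⟨hlx, hxb.trans_lt hbr⟩
  have hlx : l < x := hlx.lt_of_ne (by rintro rfl; linarith)
  refine ⟨x, ⟨⟨hlx, hx.2⟩, fun y hy => ?_, hfx, fun y hy => ?_⟩, ?_⟩
  · exact hfx ▸ hf ⟨hy.1, hy.2.trans hx.2⟩ hx hy.2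
  · exact hfx ▸ hf hx ⟨hlx.le.trans hy.1.le, hy.2⟩ hy.1
  · rintro z ⟨hz, -, hfz, -⟩
    exact hf.injOn ⟨hz.1.le, hz.2⟩ hx (hfz.trans hfx.symm)

theorem stmt_10 :
    ∃! a₀ : ℝ, a₀ ∈ Ioo (1/2 : ℝ) 1 ∧
      (∀ a ∈ Ico (1/2 : ℝ) a₀, 0 < Ifun a) ∧
      Ifun a₀ = 0 ∧
      (∀ a ∈ Ioo a₀ (1:ℝ), Ifun a < 0) := by
  have hIco : Ico (1 / 2 : ℝ) 1 ⊆ Ioo 0 1 := fun a ha => ⟨by linarith [ha.1], ha.2⟩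
  have hIcc : Icc (1 / 2 : ℝ) (16 / 17) ⊆ Ioo 0 1 :=
    fun a ha => ⟨by linarith [ha.1], by linarith [ha.2]⟩
  refine existsUnique_sign_change_of_strictAntiOn (Ifun_strictAntiOn.mono hIco)
    (Ifun_continuousOn.mono hIcc) (by norm_num) (by norm_num) ?_ Ifun_sixteen_div_seventeen_neg
  rw [Ifun_one_half]
  linarith [pi_gt_three]
end

section
/- For $a \in (0,1)$, $a \leq 1/4$ if and only if the function $f(u) = \frac{-a u^2 + (3a-1) u - (2a-1)}{1-a+a(1-u)^2}$ attains its maximum over $[0,1]$ at $u = 0$, i.e., $f(0) = \max_{u \in [0,1]} f(u)$ (weak KPP property). -/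
open Set

theorem stmt_11 (a : ℝ) (ha : a ∈ Ioo (0:ℝ) 1) :
    a ≤ 1/4 ↔
      ∀ u ∈ Icc (0:ℝ) 1,
        (-a*u^2 + (3*a-1)*u - (2*a-1)) / (1 - a + a*(1-u)^2)
          ≤ (-a*0^2 + (3*a-1)*0 - (2*a-1)) / (1 - a + a*(1-0)^2) := by
  obtain ⟨ha0, ha1⟩ := ha
  constructor
  · intro h u hu
    obtain ⟨hu0, hu1⟩ := hu
    have hD : 0 < 1 - a + a*(1-u)^2 := by nlinarith [sq_nonneg (1-u)]
    have hD0 : (0:ℝ) < 1 - a + a*(1-(0:ℝ))^2 := by nlinarith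
    rw [div_le_div_iff₀ hD hD0]
    nlinarith [mul_nonneg (mul_nonneg hu0 (by linarith : (0:ℝ) ≤ 1-a))
      (by nlinarith : (0:ℝ) ≤ 1-4*a+2*a*u)]
  · intro h
    by_contra hc
    push_neg at hc
    set u := (4*a-1)/(4*a) with hudef
    have h4a : (0:ℝ) < 4*a := by linarith
    have hu0 : 0 ≤ u := le_of_lt (div_pos (by linarith) h4a)
    have hu1 : u ≤ 1 := by rw [hudef, div_le_one h4a]; linarith
    have hle := h u ⟨hu0, hu1⟩
    have hD : 0 < 1 - a + a*(1-u)^2 := by nlinarith [sq_nonneg (1-u)]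
    have hD0 : (0:ℝ) < 1 - a + a*(1-(0:ℝ))^2 := by nlinarith
    rw [div_le_div_iff₀ hD hD0] at hle
    have huv : 4*a*u = 4*a-1 := by
      rw [hudef]; field_simp
    have hupos : 0 < u := div_pos (by linarith) h4a
    nlinarith [hle, sq_nonneg u, mul_pos hupos hupos]
end

section
/- Let $a \in (0,1)$. Define $w_0(u,v) = 1 + a u^2 - 2au + 2auv$ and $f_{0,2}(u,v) = \frac{u(1+2a-au-2av)}{w_0(u,v)}$. Then for all $(u,v)$ in the triangle $T$, $\partial_u f_{0,2}(u,v) \geq 1 - a > 0$. -/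
open Set

/-!
Write `w = w₀(u,v)` and `s = 1 - u - v ≥ 0`. The quotient rule gives the stated derivative, whose
numerator `w (1 + 2as) + 2au(1 + au + 2as)s` is at least `w`. On `T` one has `0 < w ≤ 1`, since
`w = 1 - a + a(1-u)² + 2auv = 1 - au(s + (1 - v))`; hence the derivative is at least `w / w² ≥ 1 > 1 - a`.
-/

section Weight

variable {a u v : ℝ}

lemma w0_pos (ha0 : 0 ≤ a) (ha1 : a < 1) (hu : 0 ≤ u) (hv : 0 ≤ v) :
    0 < 1 + a*u^2 - 2*a*u + 2*a*u*v := by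
  have h : 1 + a*u^2 - 2*a*u + 2*a*u*v = (1 - a) + a*(1 - u)^2 + 2*a*u*v := by ring
  rw [h]
  have : 0 ≤ a*(1 - u)^2 := by positivity
  have : 0 ≤ 2*a*u*v := by positivity
  linarith

lemma w0_le_one (ha0 : 0 ≤ a) (hu : 0 ≤ u) (huv : u + v ≤ 1) :
    1 + a*u^2 - 2*a*u + 2*a*u*v ≤ 1 := by
  have h : 1 + a*u^2 - 2*a*u + 2*a*u*v = 1 - a*u*((1 - u - v) + (1 - v)) := by ring
  rw [h]
  have : 0 ≤ a*u*((1 - u - v) + (1 - v)) := by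
    have : 0 ≤ (1 - u - v) + (1 - v) := by linarith
    positivity
  linarith

end Weight

lemma hasDerivAt_f02 (a v u : ℝ) (hw : 1 + a*u^2 - 2*a*u + 2*a*u*v ≠ 0) :
    HasDerivAt
      (fun u' : ℝ =>
        u'*(1 + 2*a - a*u' - 2*a*v) / (1 + a*u'^2 - 2*a*u' + 2*a*u'*v))
      (((1 + a*u^2 - 2*a*u + 2*a*u*v)*(1 + 2*a*(1-u-v))
          + 2*a*u*(1 + a*u + 2*a*(1-u-v))*(1-u-v))
        / (1 + a*u^2 - 2*a*u + 2*a*u*v)^2) u := by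
  have hN : HasDerivAt (fun u' : ℝ => u'*(1 + 2*a - a*u' - 2*a*v))
      (1*(1 + 2*a - a*u - 2*a*v) + u*(0 - a*1 - 0)) u :=
    (hasDerivAt_id' u).mul ((((hasDerivAt_const u _).sub ((hasDerivAt_id' u).const_mul a))).sub
      (hasDerivAt_const u _))
  have hD : HasDerivAt (fun u' : ℝ => 1 + a*u'^2 - 2*a*u' + 2*a*u'*v)
      (a*(↑2*u^(2-1)) - 2*a*1 + 2*a*1*v) u :=
    ((((hasDerivAt_pow 2 u).const_mul a).const_add 1).sub ((hasDerivAt_id' u).const_mul (2*a))).add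
      (((hasDerivAt_id' u).const_mul (2*a)).mul_const v)
  refine (hN.fun_div hD hw).congr_deriv ?_
  field_simp
  ring

lemma self_le_numerator {w a u s : ℝ} (hw : 0 ≤ w) (ha : 0 ≤ a) (hu : 0 ≤ u) (hs : 0 ≤ s) :
    w ≤ w*(1 + 2*a*s) + 2*a*u*(1 + a*u + 2*a*s)*s := by
  have : 0 ≤ w*(2*a*s) := by positivity
  have : 0 ≤ 2*a*u*(1 + a*u + 2*a*s)*s := by positivity
  linarith

lemma le_div_sq_of_le {w N c : ℝ} (hw0 : 0 < w) (hw1 : w ≤ 1) (hN : w ≤ N) (hc : c ≤ 1) :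
    c ≤ N / w^2 := by
  calc c ≤ 1 := hc
    _ ≤ w / w^2 := by rw [le_div_iff₀ (by positivity)]; nlinarith
    _ ≤ N / w^2 := by gcongr

theorem stmt_13 (a : ℝ) (ha : a ∈ Ioo (0:ℝ) 1) (u v : ℝ)
    (hu : 0 ≤ u) (hv : 0 ≤ v) (huv : u + v ≤ 1) :
    HasDerivAt
      (fun u' : ℝ =>
        u'*(1 + 2*a - a*u' - 2*a*v) / (1 + a*u'^2 - 2*a*u' + 2*a*u'*v))
      (((1 + a*u^2 - 2*a*u + 2*a*u*v)*(1 + 2*a*(1-u-v))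
          + 2*a*u*(1 + a*u + 2*a*(1-u-v))*(1-u-v))
        / (1 + a*u^2 - 2*a*u + 2*a*u*v)^2) u ∧
    1 - a ≤ ((1 + a*u^2 - 2*a*u + 2*a*u*v)*(1 + 2*a*(1-u-v))
          + 2*a*u*(1 + a*u + 2*a*(1-u-v))*(1-u-v))
        / (1 + a*u^2 - 2*a*u + 2*a*u*v)^2 ∧
    0 < 1 - a := by
  obtain ⟨ha0, ha1⟩ := ha
  have hw := w0_pos ha0.le ha1 hu hv
  have hs : 0 ≤ 1 - u - v := by linarith
  refine ⟨hasDerivAt_f02 a v u hw.ne', ?_, by linarith⟩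
  exact le_div_sq_of_le hw (w0_le_one ha0.le hu huv) (self_le_numerator hw.le ha0.le hu hs)
    (by linarith)
end

section
/- For all $a \in [1/4, 1/2]$ and $b \in [0, a]$, $2\sqrt{\frac{1+a-2b}{1-a}} > \sqrt{2\,\frac{1-\sqrt{a}}{\sqrt{a}}}$. -/
theorem stmt_17 (a b : ℝ) (ha0 : 1/4 ≤ a) (ha : a ≤ 1/2) (hb0 : 0 ≤ b) (hba : b ≤ a) :
    Real.sqrt (2 * (1 - Real.sqrt a) / Real.sqrt a)
      < 2 * Real.sqrt ((1 + a - 2*b) / (1 - a)) := by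
  have hsa : (1/2:ℝ) ≤ Real.sqrt a := by
    have : Real.sqrt (1/4) ≤ Real.sqrt a := Real.sqrt_le_sqrt ha0
    rwa [show (1/4:ℝ) = (1/2)^2 by norm_num, Real.sqrt_sq (by norm_num)] at this
  have hsa0 : (0:ℝ) < Real.sqrt a := by linarith
  have h1a : (0:ℝ) < 1 - a := by linarith
  have hL : Real.sqrt (2 * (1 - Real.sqrt a) / Real.sqrt a) < 2 := by
    rw [Real.sqrt_lt' (by norm_num)]
    rw [div_lt_iff₀ hsa0]
    nlinarith
  have hR : (2:ℝ) ≤ 2 * Real.sqrt ((1 + a - 2*b) / (1 - a)) := by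
    have h1 : (1:ℝ) ≤ (1 + a - 2*b) / (1 - a) := by
      rw [le_div_iff₀ h1a]; linarith
    have := Real.one_le_sqrt.mpr h1
    linarith
  linarith
end
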